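/- Let B be a 3×3 real symmetric positive-definite matrix (with hB : B.IsHermitian) and let h be an isotropic map from 3×3 real symmetric positive-definite matrices to 3×3 real symmetric matrices. Then for every real number s, the matrix h(B) commutes with the real power Bˢ, where Bˢ is defined by the continuous functional calculus applied to the eigenvalues: h(B) * hB.cfc (fun x => x ^ s) = hB.cfc (fun x => x ^ s) * h(B). -/

import Mathlib

/-!
Diagonalise `B = U D Uᵀ` with `U` orthogonal. For each coordinate `i`, conjugating by `U` the
diagonal sign matrix `Sᵢ` with `+1` only in position `i` gives a rotation `Rᵢ` (the dimension is
odd) that commutes with `B`; isotropy then makes `h B` commute with `Rᵢ`. Since the matrices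
`(1 + Sᵢ) / 2` are the coordinate projections, the `Rᵢ` together with `1` span all `U Λ Uᵀ` with `Λ` diagonal,
and `Bˢ` is one of them.
-/

open Matrix

namespace Matrix

variable {n : Type*} [Fintype n] [DecidableEq n]

/-- In dimension three, the rotation by `π` about the `i`-th coordinate axis. -/
def halfTurn (i : n) : Matrix n n ℝ :=
  diagonal fun j => if j = i then 1 else -1

lemma transpose_halfTurn_mul_self (i : n) : (halfTurn i)ᵀ * halfTurn i = 1 := by
  rw [halfTurn, diagonal_transpose, diagonal_mul_diagonal, ← diagonal_one]
  congr 1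
  ext j
  split_ifs <;> norm_num

lemma det_halfTurn (hn : Odd (Fintype.card n)) (i : n) : (halfTurn i).det = 1 := by
  rw [halfTurn, det_diagonal, Finset.prod_ite, Finset.prod_const_one, one_mul,
    Finset.prod_const, Finset.filter_ne', Finset.card_erase_of_mem (Finset.mem_univ i),
    Finset.card_univ]
  exact (Nat.Odd.sub_odd hn odd_one).neg_one_pow

lemma diagonal_eq_sum_halfTurn (d : n → ℝ) :
    diagonal d = ∑ i, (d i / 2) • (halfTurn i + 1) := by
  ext j k
  by_cases hjk : j = k
  · subst hjk
    simp [halfTurn, sum_apply, ite_add]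
  · simp [halfTurn, sum_apply, hjk]

section Conjugation

open Unitary

variable (U : unitary (Matrix n n ℝ))

lemma transpose_conjStarAlgAut_mul_self {X : Matrix n n ℝ} (hX : Xᵀ * X = 1) :
    (conjStarAlgAut ℝ _ U X)ᵀ * conjStarAlgAut ℝ _ U X = 1 := by
  rw [← conjTranspose_eq_transpose_of_trivial, ← star_eq_conjTranspose, ← map_star, ← map_mul,
    star_eq_conjTranspose, conjTranspose_eq_transpose_of_trivial, hX, map_one]

lemma det_conjStarAlgAut (X : Matrix n n ℝ) : (conjStarAlgAut ℝ _ U X).det = X.det := by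
  rw [conjStarAlgAut_apply, det_mul, det_mul, mul_right_comm, ← det_mul, ← coe_star,
    coe_mul_star_self, det_one, one_mul]

lemma commute_conjStarAlgAut_halfTurn {B : Matrix n n ℝ} (hB : B.IsHermitian) (i : n) :
    Commute (conjStarAlgAut ℝ _ hB.eigenvectorUnitary (halfTurn i)) B := by
  conv_rhs => rw [hB.spectral_theorem]
  exact (commute_diagonal _ _).map _

lemma commute_conjStarAlgAut_diagonal {X : Matrix n n ℝ}
    (hX : ∀ i, Commute X (conjStarAlgAut ℝ _ U (halfTurn i))) (d : n → ℝ) :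
    Commute X (conjStarAlgAut ℝ _ U (diagonal d)) := by
  rw [diagonal_eq_sum_halfTurn, map_sum]
  refine Commute.sum_right _ _ _ fun i _ => ?_
  rw [map_smul, map_add, map_one]
  exact ((hX i).add_right (Commute.one_right X)).smul_right _

end Conjugation

variable {α : Type*} [CommRing α]

lemma commute_of_isotropic {h : Matrix n n α → Matrix n n α} {B R : Matrix n n α}
    (hiso : h (Rᵀ * B * R) = Rᵀ * h B * R) (hR : Rᵀ * R = 1) (hRB : Commute R B) :
    Commute R (h B) := by
  have hfix : Rᵀ * B * R = B := by rw [mul_assoc, ← hRB.eq, ← mul_assoc, hR, one_mul]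
  rw [hfix] at hiso
  calc R * h B = R * (Rᵀ * h B * R) := by rw [← hiso]
    _ = h B * R := by rw [← mul_assoc, ← mul_assoc, mul_eq_one_comm.mp hR, one_mul]

end Matrix

theorem commute_rpow_of_isotropic_general
    (B : Matrix (Fin 3) (Fin 3) ℝ) (hBpd : B.PosDef) (hB : B.IsHermitian)
    (h : Matrix (Fin 3) (Fin 3) ℝ → Matrix (Fin 3) (Fin 3) ℝ)
    (hiso : ∀ M : Matrix (Fin 3) (Fin 3) ℝ, M.PosDef →
      ∀ R : Matrix (Fin 3) (Fin 3) ℝ, Rᵀ * R = 1 → R.det = 1 →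
        h (Rᵀ * M * R) = Rᵀ * h M * R)
    (s : ℝ) :
    h B * hB.cfc (fun x => x ^ s) = hB.cfc (fun x => x ^ s) * h B := by
  refine commute_conjStarAlgAut_diagonal _ (fun i => ?_) _
  set R := Unitary.conjStarAlgAut ℝ _ hB.eigenvectorUnitary (halfTurn i)
  have hR : Rᵀ * R = 1 := transpose_conjStarAlgAut_mul_self _ (transpose_halfTurn_mul_self i)
  have hdet : R.det = 1 := by rw [det_conjStarAlgAut, det_halfTurn (by decide)]
  exact (commute_of_isotropic (hiso B hBpd R hR hdet) hR
    (commute_conjStarAlgAut_halfTurn hB i)).symm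

/-- If `h` is an isotropic map from symmetric positive-definite `3×3` real matrices to
symmetric matrices, then `h B` commutes with every real power `Bˢ` of `B`, where `Bˢ` is
obtained by applying `x ↦ x ^ s` to the eigenvalues of `B` via the functional calculus. -/
theorem commute_rpow_of_isotropic
    (B : Matrix (Fin 3) (Fin 3) ℝ) (hBpd : B.PosDef) (hB : B.IsHermitian)
    (h : Matrix (Fin 3) (Fin 3) ℝ → Matrix (Fin 3) (Fin 3) ℝ)
    (hsym : ∀ M : Matrix (Fin 3) (Fin 3) ℝ, M.PosDef → (h M)ᵀ = h M)
    (hiso : ∀ M : Matrix (Fin 3) (Fin 3) ℝ, M.PosDef →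
      ∀ R : Matrix (Fin 3) (Fin 3) ℝ, Rᵀ * R = 1 → R.det = 1 →
        h (Rᵀ * M * R) = Rᵀ * h M * R)
    (s : ℝ) :
    h B * hB.cfc (fun x => x ^ s) = hB.cfc (fun x => x ^ s) * h B :=
  commute_rpow_of_isotropic_general B hBpd hB h hiso s
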